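/- Let p be a prime and G a finite group. Let H₁, …, H_m be cyclic subgroups of G of order prime to p that are pairwise non-conjugate in G. For each i, let χ_i be the ℚ-valued function on the set of p-regular elements of G (elements of order prime to p) defined by χ_i(g) = the number of cosets in G/H_i fixed by left multiplication by g. Then the functions χ₁, …, χ_m are linearly independent over ℚ. -/

import Mathlib

/-!
Suppose `∑ cᵢ χᵢ = 0` with some `cᵢ ≠ 0`, and among those indices pick `i` with `|Hᵢ|` maximal.
Evaluate at a generator `g` of `Hᵢ`, which is `p`-regular. The coset `Hᵢ` is fixed by `g`, so
`χᵢ(g) > 0`. If `g` fixed a coset `aHⱼ`, then `a⁻¹Hᵢa ≤ Hⱼ`, and `|Hⱼ| ≤ |Hᵢ|` would force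
`a⁻¹Hᵢa = Hⱼ`; hence `χⱼ(g) = 0` for the other indices, and the relation gives `cᵢ = 0`.
-/

/-- The set of `p`-regular elements of `G`: elements whose order is prime to `p`. -/
def PRegular (p : ℕ) (G : Type*) [Group G] : Type _ :=
  {g : G // Nat.Coprime (orderOf g) p}

/-- The Brauer character of the permutation module `F_p[G/H]`: the `ℚ`-valued function on
`p`-regular elements sending `g` to the number of cosets in `G/H` fixed by left
multiplication by `g`. -/
noncomputable def permChar (p : ℕ) (G : Type*) [Group G] (H : Subgroup G) :
    PRegular p G → ℚ := fun g =>
  (Nat.card {x : G ⧸ H // g.1 • x = x} : ℚ)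

open Subgroup

theorem linearIndependent_of_triangular {ι X R β : Type*} [Finite ι] [Ring R]
    [NoZeroDivisors R] [LinearOrder β] (v : ι → X → R) (w : ι → β) (x : ι → X)
    (hdiag : ∀ i, v i (x i) ≠ 0) (hoff : ∀ i j, j ≠ i → w j ≤ w i → v j (x i) = 0) :
    LinearIndependent R v := by
  classical
  cases nonempty_fintype ι
  rw [Fintype.linearIndependent_iff]
  intro c hc
  by_contra! hne
  obtain ⟨i, hi, hmax⟩ := (Finset.univ.filter (c · ≠ 0)).exists_max_image w
    (by simpa [Finset.filter_nonempty_iff] using hne)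
  have hci : c i ≠ 0 := (Finset.mem_filter.mp hi).2
  have heval : ∑ j, c j * v j (x i) = 0 := by simpa using congrFun hc (x i)
  rw [Finset.sum_eq_single i (fun j _ hji => ?_) (by simp)] at heval
  · exact mul_ne_zero hci (hdiag i) heval
  · by_cases hcj : c j = 0
    · rw [hcj, zero_mul]
    · rw [hoff i j hji (hmax j (by simpa using hcj)), mul_zero]

section Group

variable {G : Type*} [Group G]

theorem smul_mk_eq_mk_iff (H : Subgroup G) (g a : G) :
    g • (a : G ⧸ H) = a ↔ a⁻¹ * g * a ∈ H := by
  rw [MulAction.Quotient.smul_mk, QuotientGroup.eq, ← H.inv_mem_iff]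
  simp [mul_assoc]

theorem image_conj_zpowers (a g : G) :
    (fun x => a⁻¹ * x * a) '' (zpowers g : Set G) = zpowers (a⁻¹ * g * a) := by
  have hconj : (fun x => a⁻¹ * x * a) = (MulAut.conj a⁻¹).toMonoidHom := by
    ext x
    simp [mul_assoc]
  rw [hconj, ← coe_map (MulAut.conj a⁻¹).toMonoidHom, MonoidHom.map_zpowers]
  simp [mul_assoc]

theorem exists_conj_zpowers_eq_of_smul_eq {L : Subgroup G} [Finite L] {g : G}
    (hcard : Nat.card L ≤ orderOf g) {x : G ⧸ L} (hx : g • x = x) :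
    ∃ a : G, (fun y => a⁻¹ * y * a) '' (zpowers g : Set G) = L := by
  obtain ⟨a, rfl⟩ := QuotientGroup.mk_surjective x
  refine ⟨a, ?_⟩
  rw [image_conj_zpowers]
  have horder : orderOf (a⁻¹ * g * a) = orderOf g :=
    SemiconjBy.orderOf_eq a (by simp [SemiconjBy, mul_assoc])
  congr 1
  refine eq_of_le_of_card_ge (zpowers_le.mpr ((smul_mk_eq_mk_iff L g a).mp hx)) ?_
  rwa [Nat.card_zpowers, horder]

end Group

theorem permChar_eq_zero_iff {p : ℕ} {G : Type*} [Group G] {H : Subgroup G} [Finite (G ⧸ H)]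
    (g : PRegular p G) : permChar p G H g = 0 ↔ ∀ x : G ⧸ H, g.1 • x ≠ x := by
  rw [permChar, Nat.cast_eq_zero, Finite.card_eq_zero_iff, isEmpty_subtype]

theorem linearIndependent_permChar_general (p : ℕ) (G : Type) [Group G] [Fintype G]
    (m : ℕ) (H : Fin m → Subgroup G)
    (hcyc : ∀ i, IsCyclic (H i)) (hcop : ∀ i, Nat.Coprime (Nat.card (H i)) p)
    (hnc : ∀ i j, i ≠ j →
      ¬ ∃ g : G, (fun x => g⁻¹ * x * g) '' ((H i : Subgroup G) : Set G) = (H j : Set G)) :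
    LinearIndependent ℚ (fun i => permChar p G (H i)) := by
  choose g hg using fun i => (H i).isCyclic_iff_exists_zpowers_eq_top.mp (hcyc i)
  have horder (i : Fin m) : orderOf (g i) = Nat.card (H i) := by rw [← hg i, Nat.card_zpowers]
  let x (i : Fin m) : PRegular p G := ⟨g i, horder i ▸ hcop i⟩
  refine linearIndependent_of_triangular _ (fun i => Nat.card (H i)) x (fun i => ?_)
    (fun i j hji hle => ?_)
  · have hfix : g i • ((1 : G) : G ⧸ H i) = (1 : G) := by
      rw [smul_mk_eq_mk_iff, ← hg i]
      simp
    rw [Ne, permChar_eq_zero_iff, not_forall_not]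
    exact ⟨_, hfix⟩
  · rw [permChar_eq_zero_iff]
    intro y hy
    obtain ⟨a, ha⟩ := exists_conj_zpowers_eq_of_smul_eq (hle.trans (horder i).ge) hy
    exact hnc i j (Ne.symm hji) ⟨a, hg i ▸ ha⟩

/-- **Key input to Theorem 0.6.**  The Brauer characters of the permutation modules
`F_p[G/Hᵢ]` attached to pairwise non-conjugate cyclic `p'`-subgroups `H₁, …, H_m` of a finite
group `G` are linearly independent over `ℚ`. -/
theorem linearIndependent_permChar (p : ℕ) (hp : p.Prime) (G : Type) [Group G] [Fintype G]
    (m : ℕ) (H : Fin m → Subgroup G)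
    (hcyc : ∀ i, IsCyclic (H i)) (hcop : ∀ i, Nat.Coprime (Nat.card (H i)) p)
    (hnc : ∀ i j, i ≠ j →
      ¬ ∃ g : G, (fun x => g⁻¹ * x * g) '' ((H i : Subgroup G) : Set G) = (H j : Set G)) :
    LinearIndependent ℚ (fun i => permChar p G (H i)) :=
  linearIndependent_permChar_general p G m H hcyc hcop hnc
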